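/- (Vogan) If Y and Y' are standard Young tableaux with n boxes and τ_g(Y) = τ_g(Y') (i.e., Y ≈_m Y' for all m ≥ 0), then Y = Y'. -/

import Mathlib

/-! ## Standard Young tableaux, encoded by entry positions

A filling with `n` entries is a function `p : ℕ → ℕ × ℕ` where `p k` is the
(row, column) position (0-indexed, rows increasing downwards) of the entry
numbered `k + 1`; only the values `p 0, …, p (n-1)` are relevant. -/

/-- `p` is a standard Young tableau with `n` boxes: the positions of the
entries are distinct and every initial segment of positions forms a Young
diagram (a lower set in `ℕ × ℕ`); this is equivalent to the shape being a
Young diagram with entries strictly increasing along rows and columns. -/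
def IsSYT (n : ℕ) (p : ℕ → ℕ × ℕ) : Prop :=
  Set.InjOn p (Set.Iio n) ∧
  ∀ k < n, IsLowerSet {q : ℕ × ℕ | ∃ j ≤ k, p j = q}

/-- The shape (set of boxes) of a filling with `n` entries. -/
def shapeYT (n : ℕ) (p : ℕ → ℕ × ℕ) : Set (ℕ × ℕ) :=
  p '' Set.Iio n

/-- The τ-invariant of a filling: `i ∈ tauYT n p` encodes the simple
transposition `s_(i+1)` (indices shifted down by one throughout), and holds
when the entry indexed `i + 1` lies in a strictly lower row than the entry
indexed `i`. -/
def tauYT (n : ℕ) (p : ℕ → ℕ × ℕ) : Set ℕ :=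
  {i | i + 1 < n ∧ (p i).1 < (p (i + 1)).1}

/-- Exchange the entries indexed `i` and `i + 1` (the action of the simple
transposition `s_(i+1)` on fillings). -/
def swapEntries (i : ℕ) (p : ℕ → ℕ × ℕ) : ℕ → ℕ × ℕ :=
  p ∘ Equiv.swap i (i + 1)

/-- Two simple transpositions indexed by `i` and `j` are adjacent. -/
def Adjacent (i j : ℕ) : Prop := i = j + 1 ∨ j = i + 1

/-- `D^YT_{i,j}`: standard Young tableaux whose τ-invariant contains `i` but
not `j`. -/
def DYT (n i j : ℕ) (p : ℕ → ℕ × ℕ) : Prop :=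
  IsSYT n p ∧ i ∈ tauYT n p ∧ j ∉ tauYT n p

open Classical in
/-- `f^YT_{i,j}` : the unique one of `s_i · Y`, `s_j · Y` that is a standard
tableau lying in `D^YT_{j,i}` (junk outside the intended domain). -/
noncomputable def fYT (n i j : ℕ) (p : ℕ → ℕ × ℕ) : ℕ → ℕ × ℕ :=
  if DYT n j i (swapEntries i p) then swapEntries i p else swapEntries j p

/-- A column superstandard tableau: the columns are filled consecutively,
`1, …, c₁` down the first column, then `c₁+1, …, c₁+c₂` down the second
column, and so on. -/
def IsColSuperstandard (n : ℕ) (p : ℕ → ℕ × ℕ) : Prop :=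
  IsSYT n p ∧ (0 < n → p 0 = (0, 0)) ∧
  ∀ k, k + 1 < n →
    p (k + 1) = ((p k).1 + 1, (p k).2) ∨ p (k + 1) = (0, (p k).2 + 1)

/-- Generalized τ-equivalence to order `m` on fillings. -/
def approxYT (n : ℕ) : ℕ → (ℕ → ℕ × ℕ) → (ℕ → ℕ × ℕ) → Prop
  | 0, p, q => tauYT n p = tauYT n q
  | m + 1, p, q => approxYT n m p q ∧
      ∀ i j, Adjacent i j → i + 1 < n → j + 1 < n →
        DYT n i j p → DYT n i j q →
        approxYT n m (fYT n i j p) (fYT n i j q)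

/-! ## Permutations -/

/-- The τ-invariant of a permutation of `{0, …, n-1}` (one-line notation
`x 0, x 1, …, x (n-1)`): `i ∈ tauSn x` encodes the simple transposition
`s_(i+1)`, and holds iff the value `i + 1` appears to the left of the value
`i`; equivalently `ℓ(s_(i+1) x) < ℓ(x)`. -/
def tauSn {n : ℕ} (x : Equiv.Perm (Fin n)) : Set ℕ :=
  {i | ∃ h : i + 1 < n, x⁻¹ ⟨i + 1, h⟩ < x⁻¹ ⟨i, Nat.lt_of_succ_lt h⟩}

/-- Left multiplication by the simple transposition exchanging the values
`i` and `i + 1`. -/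
def simpleMul {n : ℕ} (i : ℕ) (x : Equiv.Perm (Fin n)) : Equiv.Perm (Fin n) :=
  if h : i + 1 < n then
    Equiv.swap (⟨i, Nat.lt_of_succ_lt h⟩ : Fin n) ⟨i + 1, h⟩ * x
  else x

/-- `D^{S_n}_{i,j}`: permutations whose τ-invariant contains `i` but not `j`. -/
def DSn {n : ℕ} (i j : ℕ) (x : Equiv.Perm (Fin n)) : Prop :=
  i ∈ tauSn x ∧ j ∉ tauSn x

open Classical in
/-- `f^{S_n}_{i,j}` : the unique one of `s_i x`, `s_j x` lying in
`D^{S_n}_{j,i}` (junk outside the intended domain). -/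
noncomputable def fSn {n : ℕ} (i j : ℕ) (x : Equiv.Perm (Fin n)) : Equiv.Perm (Fin n) :=
  if DSn j i (simpleMul i x) then simpleMul i x else simpleMul j x

/-- Generalized τ-equivalence to order `m` on permutations. -/
def approxSn {n : ℕ} : ℕ → Equiv.Perm (Fin n) → Equiv.Perm (Fin n) → Prop
  | 0, x, y => tauSn x = tauSn y
  | m + 1, x, y => approxSn m x y ∧
      ∀ i j, Adjacent i j → i + 1 < n → j + 1 < n →
        DSn i j x → DSn i j y → approxSn m (fSn i j x) (fSn i j y)

/-- `v` lies strictly between `u` and `w`. -/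
def Between {n : ℕ} (u v w : Fin n) : Prop :=
  (u < v ∧ v < w) ∨ (w < v ∧ v < u)

/-- `x` and `y` are related by a dual Knuth step of type `a + 2` (with our
0-indexed values, `a`, `a+1`, `a+2` play the roles of `i-1`, `i`, `i+1`):
their one-line notations differ either by transposing the values `a+1` and
`a+2` with the value `a` appearing between them, or by transposing the
values `a` and `a+1` with the value `a+2` appearing between them. -/
def DualKnuthStep {n : ℕ} (a : ℕ) (x y : Equiv.Perm (Fin n)) : Prop :=
  ∃ h : a + 2 < n,
    (y = simpleMul (a + 1) x ∧
      Between (x⁻¹ ⟨a + 1, Nat.lt_of_succ_lt h⟩)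
        (x⁻¹ ⟨a, Nat.lt_of_succ_lt (Nat.lt_of_succ_lt h)⟩)
        (x⁻¹ ⟨a + 2, h⟩)) ∨
    (y = simpleMul a x ∧
      Between (x⁻¹ ⟨a, Nat.lt_of_succ_lt (Nat.lt_of_succ_lt h)⟩)
        (x⁻¹ ⟨a + 2, h⟩)
        (x⁻¹ ⟨a + 1, Nat.lt_of_succ_lt h⟩))

/-! ## The Robinson–Schensted correspondence -/

/-- Schensted row-bumping: insert the value `v` into the given rows,
returning the new rows together with the index of the row where a new box
was created. -/
def bump : List (List ℕ) → ℕ → List (List ℕ) × ℕ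
  | [], v => ([[v]], 0)
  | r :: rs, v =>
    match r.findIdx? (fun a => decide (v < a)) with
    | none => ((r ++ [v]) :: rs, 0)
    | some c =>
      let out := bump rs (r.getD c 0)
      ((r.set c v) :: out.1, out.2 + 1)

/-- Append the value `k` at the end of row `r` (creating a new row at the
bottom if necessary). -/
def addAt (Q : List (List ℕ)) (r k : ℕ) : List (List ℕ) :=
  if r < Q.length then Q.set r ((Q.getD r []) ++ [k]) else Q ++ [[k]]

/-- Run the Robinson–Schensted algorithm on the one-line word of `x`,
producing the insertion and recording tableaux as lists of rows (all values
0-indexed). -/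
def RSrows {n : ℕ} (x : Equiv.Perm (Fin n)) : List (List ℕ) × List (List ℕ) :=
  (List.finRange n).foldl
    (fun PQ k =>
      let out := bump PQ.1 (x k : ℕ)
      (out.1, addAt PQ.2 out.2 (k : ℕ)))
    ([], [])

/-- The (row, column) position of the value `k` in a list of rows. -/
def posIn (rows : List (List ℕ)) (k : ℕ) : ℕ × ℕ :=
  (rows.findIdx (fun r => r.contains k),
   (rows.getD (rows.findIdx (fun r => r.contains k)) []).idxOf k)

/-- The insertion tableau `P(x)`, as a position function. -/
def Ptab {n : ℕ} (x : Equiv.Perm (Fin n)) : ℕ → ℕ × ℕ :=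
  fun k => posIn (RSrows x).1 k

/-- The recording tableau `Q(x)`, as a position function. -/
def Qtab {n : ℕ} (x : Equiv.Perm (Fin n)) : ℕ → ℕ × ℕ :=
  fun k => posIn (RSrows x).2 k

/-- Generalized τ-equivalence to order `m` between a permutation and a
filling. -/
def approxMixed {n : ℕ} : ℕ → Equiv.Perm (Fin n) → (ℕ → ℕ × ℕ) → Prop
  | 0, x, p => tauSn x = tauYT n p
  | m + 1, x, p => approxMixed m x p ∧
      ∀ i j, Adjacent i j → i + 1 < n → j + 1 < n →
        DSn i j x → DYT n i j p →
        approxMixed m (fSn i j x) (fYT n i j p)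

/-- Sequences of `f^YT`-moves: `ChainDefined n L p` says the sequence of
maps given by `L` is defined on `p`, i.e. each intermediate tableau lies in
the domain of the next map. -/
def ChainDefined (n : ℕ) : List (ℕ × ℕ) → (ℕ → ℕ × ℕ) → Prop
  | [], _ => True
  | ij :: L, p =>
      Adjacent ij.1 ij.2 ∧ ij.1 + 1 < n ∧ ij.2 + 1 < n ∧ DYT n ij.1 ij.2 p ∧
      ChainDefined n L (fYT n ij.1 ij.2 p)

/-- Apply a sequence of `f^YT`-moves. -/
noncomputable def applySeq (n : ℕ) (L : List (ℕ × ℕ)) (p : ℕ → ℕ × ℕ) : ℕ → ℕ × ℕ :=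
  L.foldl (fun q ij => fYT n ij.1 ij.2 q) p


/-!
Induction on `n`. Generalized τ-equivalence restricts to the first `n - 1` entries, so `p` and
`p'` agree there and their largest entries occupy addable corners of the common shape `λ`; corners
in the same row coincide. Otherwise let the corner of `p'` be the lower one, in row `r`. Any two
standard tableaux of the same shape are joined by a chain of moves `f^YT` (induction on the size:
once the entry below them sits in a suitable corner, the two largest entries are exchanged by a
single move). A chain on the common part moving the entry `n - 1` into a removable corner of `λ`
in row `r - 1` is defined on both `p` and `p'` and preserves equality of `τ_g`, but afterwards
`s_{n-1}` lies in the τ-invariant of the image of `p'` and not in that of the image of `p`.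
-/

open Set Function

section

variable {n m k i j N : ℕ} {p p' q t : ℕ → ℕ × ℕ} {L L₁ L₂ : List (ℕ × ℕ)} {S : Set (ℕ × ℕ)}
  {x z z' : ℕ × ℕ}

lemma shapeYT_zero (p : ℕ → ℕ × ℕ) : shapeYT 0 p = ∅ := by
  simp [shapeYT]

lemma shapeYT_succ (p : ℕ → ℕ × ℕ) (k : ℕ) : shapeYT (k + 1) p = insert (p k) (shapeYT k p) := by
  rw [shapeYT, shapeYT, Iio_add_one_eq_Iic, ← Iio_insert, image_insert_eq]

lemma shapeYT_finite (k : ℕ) (p : ℕ → ℕ × ℕ) : (shapeYT k p).Finite :=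
  (finite_Iio k).image p

lemma shapeYT_congr (h : EqOn p q (Iio m)) (hk : k ≤ m) : shapeYT k p = shapeYT k q :=
  (h.mono (Iio_subset_Iio hk)).image_eq

lemma isSYT_iff : IsSYT n p ↔ InjOn p (Iio n) ∧ ∀ k ≤ n, IsLowerSet (shapeYT k p) := by
  have hset (k : ℕ) : {x | ∃ j ≤ k, p j = x} = shapeYT (k + 1) p := by
    ext; simp [shapeYT]
  simp only [IsSYT, hset]
  refine and_congr_right fun _ => ⟨fun h k hk => ?_, fun h k hk => h (k + 1) hk⟩
  cases k with
  | zero => simp [shapeYT_zero, isLowerSet_empty]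
  | succ k => exact h k hk

namespace IsSYT

lemma isLowerSet_shapeYT (hp : IsSYT n p) (hk : k ≤ n) : IsLowerSet (shapeYT k p) :=
  (isSYT_iff.1 hp).2 k hk

lemma mono (hp : IsSYT n p) (hmn : m ≤ n) : IsSYT m p :=
  isSYT_iff.2 ⟨hp.1.mono (Iio_subset_Iio hmn), fun _ hk => hp.isLowerSet_shapeYT (hk.trans hmn)⟩

lemma congr (hp : IsSYT n p) (h : EqOn p q (Iio n)) : IsSYT n q :=
  isSYT_iff.2 ⟨hp.1.congr h, fun _ hk => shapeYT_congr h hk ▸ hp.isLowerSet_shapeYT hk⟩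

lemma apply_notMem_shapeYT (hp : IsSYT n p) (hk : k < n) (hj : j ≤ k) :
    p k ∉ shapeYT j p := by
  rintro ⟨l, hl : l < j, hlk⟩
  exact absurd (hp.1 (show l < n by omega) hk hlk) (by omega)

lemma mem_shapeYT_of_lt (hp : IsSYT n p) (hk : k < n) {x : ℕ × ℕ} (hx : x < p k) :
    x ∈ shapeYT k p := by
  have hx' : x ∈ shapeYT (k + 1) p :=
    hp.isLowerSet_shapeYT hk hx.le (by rw [shapeYT_succ]; exact mem_insert _ _)
  rw [shapeYT_succ] at hx'
  exact hx'.resolve_left hx.ne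

-- The maximal elements of a Young diagram are its removable corners.
lemma maximal_apply (hp : IsSYT n p) (hk : k < n) : Maximal (· ∈ shapeYT (k + 1) p) (p k) := by
  refine ⟨by rw [shapeYT_succ]; exact mem_insert _ _, fun x hx hle => ?_⟩
  rw [shapeYT_succ] at hx
  rcases hx with rfl | hx
  · exact le_rfl
  · exact absurd (hp.isLowerSet_shapeYT hk.le hle hx) (hp.apply_notMem_shapeYT hk le_rfl)

lemma shapeYT_eq_diff (hp : IsSYT n p) (hk : k < n) :
    shapeYT k p = shapeYT (k + 1) p \ {p k} := by
  rw [shapeYT_succ, insert_sdiff_self_of_notMem (hp.apply_notMem_shapeYT hk le_rfl)]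

lemma not_le_of_lt (hp : IsSYT n p) (hjk : j < k) (hk : k < n) : ¬ p k ≤ p j :=
  fun hle => hp.apply_notMem_shapeYT hk le_rfl (hp.isLowerSet_shapeYT hk.le hle ⟨j, hjk, rfl⟩)

lemma covBy_of_le (hp : IsSYT n p) (hk : k + 1 < n) (hle : p k ≤ p (k + 1)) :
    p k ⋖ p (k + 1) := by
  refine ⟨lt_of_le_of_ne hle (hp.1.ne (show k < n by omega) hk (by omega)), fun x hkx hx => ?_⟩
  exact hkx.not_ge ((hp.maximal_apply (by omega)).2 (hp.mem_shapeYT_of_lt hk hx) hkx.le)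

lemma apply_succ_of_le (hp : IsSYT n p) (hk : k + 1 < n) (hle : p k ≤ p (k + 1)) :
    p (k + 1) = ((p k).1 + 1, (p k).2) ∨ p (k + 1) = ((p k).1, (p k).2 + 1) := by
  rcases Prod.covBy_iff.1 (hp.covBy_of_le hk hle) with ⟨h1, h2⟩ | ⟨h1, h2⟩
  · exact Or.inl (Prod.ext (Nat.covBy_iff_add_one_eq.1 h1).symm h2.symm)
  · exact Or.inr (Prod.ext h2.symm (Nat.covBy_iff_add_one_eq.1 h1).symm)

lemma apply_succ_of_fst_lt (hp : IsSYT n p) (hk : k + 1 < n) (hle : p k ≤ p (k + 1))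
    (hrow : (p k).1 < (p (k + 1)).1) : p (k + 1) = ((p k).1 + 1, (p k).2) :=
  (hp.apply_succ_of_le hk hle).resolve_right fun h => hrow.ne (by rw [h])

lemma apply_succ_of_fst_eq (hp : IsSYT n p) (hk : k + 1 < n) (hrow : (p (k + 1)).1 = (p k).1) :
    p (k + 1) = ((p k).1, (p k).2 + 1) := by
  have hle : p k ≤ p (k + 1) :=
    ⟨hrow.ge, le_of_not_ge fun h => hp.not_le_of_lt (lt_add_one k) hk ⟨hrow.le, h⟩⟩
  refine (hp.apply_succ_of_le hk hle).resolve_left fun h => ?_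
  rw [h] at hrow
  omega

end IsSYT

@[simp] lemma swapEntries_apply_self : swapEntries i p i = p (i + 1) := by
  simp [swapEntries]

@[simp] lemma swapEntries_apply_succ : swapEntries i p (i + 1) = p i := by
  simp [swapEntries]

lemma swapEntries_apply_of_ne (h1 : k ≠ i) (h2 : k ≠ i + 1) : swapEntries i p k = p k := by
  simp [swapEntries, Equiv.swap_apply_of_ne_of_ne h1 h2]

@[simp] lemma swapEntries_apply_add_two : swapEntries i p (i + 2) = p (i + 2) :=
  swapEntries_apply_of_ne (by omega) (by omega)

@[simp] lemma swapEntries_succ_apply : swapEntries (i + 1) p i = p i :=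
  swapEntries_apply_of_ne (by omega) (by omega)

lemma mapsTo_swap_Iio (hi : i + 1 < m) : MapsTo (Equiv.swap i (i + 1)) (Iio m) (Iio m) := by
  intro k hk
  simp only [mem_Iio] at hk ⊢
  rcases eq_or_ne k i with rfl | h1
  · rwa [Equiv.swap_apply_left]
  rcases eq_or_ne k (i + 1) with rfl | h2
  · rw [Equiv.swap_apply_right]; omega
  · rwa [Equiv.swap_apply_of_ne_of_ne h1 h2]

lemma swapEntries_congr (h : EqOn p q (Iio m)) (hi : i + 1 < m) :
    EqOn (swapEntries i p) (swapEntries i q) (Iio m) :=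
  fun _ hk => h (mapsTo_swap_Iio hi hk)

lemma shapeYT_swapEntries_of_le (h : k ≤ i) : shapeYT k (swapEntries i p) = shapeYT k p :=
  EqOn.image_eq fun _ (hj : _ < k) => swapEntries_apply_of_ne (by omega) (by omega)

lemma shapeYT_swapEntries_of_lt (h : i + 1 < k) : shapeYT k (swapEntries i p) = shapeYT k p := by
  rw [shapeYT, shapeYT, swapEntries, image_comp, image_perm]
  intro j hj
  simp only [mem_ofPred_eq, mem_Iio] at hj ⊢
  by_contra hjk
  exact hj (Equiv.swap_apply_of_ne_of_ne (by omega) (by omega))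

lemma IsSYT.isSYT_swapEntries_iff (hp : IsSYT n p) (hi : i + 1 < n) :
    IsSYT n (swapEntries i p) ↔ ¬ p i ≤ p (i + 1) := by
  refine ⟨fun hs => by simpa using hs.not_le_of_lt (lt_add_one i) hi, fun hle => ?_⟩
  refine isSYT_iff.2 ⟨hp.1.comp (Equiv.injective _).injOn (mapsTo_swap_Iio hi), fun k hk => ?_⟩
  rcases lt_trichotomy k (i + 1) with hki | rfl | hki
  · rw [shapeYT_swapEntries_of_le (by omega)]
    exact hp.isLowerSet_shapeYT hk
  · rw [shapeYT_succ, swapEntries_apply_self, shapeYT_swapEntries_of_le le_rfl]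
    rintro a b hba (rfl | ha)
    · rcases hba.eq_or_lt with rfl | hlt
      · exact mem_insert _ _
      have hb := hp.mem_shapeYT_of_lt hi hlt
      rw [shapeYT_succ] at hb
      rcases hb with rfl | hb
      · exact absurd hba hle
      · exact Or.inr hb
    · exact Or.inr (hp.isLowerSet_shapeYT (by omega) hba ha)
  · rw [shapeYT_swapEntries_of_lt hki]
    exact hp.isLowerSet_shapeYT hk

namespace IsSYT

lemma le_apply_of_lt_apply_add_two (hp : IsSYT n p) (h2 : i + 2 < n) {y : ℕ × ℕ}
    (hy : y < p (i + 2)) (hrow : y.1 ≠ (p (i + 1)).1) (hle : p i ≤ y) : y ≤ p i := by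
  have hy' : y ∈ shapeYT (i + 1 + 1) p := hp.mem_shapeYT_of_lt h2 hy
  rw [shapeYT_succ] at hy'
  exact (hp.maximal_apply (by omega)).2 (hy'.resolve_left fun h => hrow (by rw [h])) hle

-- By `isSYT_swapEntries_iff`, this lemma and the next say that `swapEntries i p` is standard when
-- the rows `a, b, c` of the entries `i, i + 1, i + 2` satisfy `a < c ≤ b`, and that
-- `swapEntries (i + 1) p` is standard when `b ≤ a < c`.
lemma not_le_apply_succ (hp : IsSYT n p) (h2 : i + 2 < n) (hac : (p i).1 < (p (i + 2)).1)
    (hcb : (p (i + 2)).1 ≤ (p (i + 1)).1) : ¬ p i ≤ p (i + 1) := by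
  intro hle
  have hi1 := hp.apply_succ_of_fst_lt (by omega) hle (hac.trans_le hcb)
  have hcol : (p (i + 1)).2 < (p (i + 2)).2 :=
    lt_of_not_ge fun h => hp.not_le_of_lt (lt_add_one (i + 1)) h2 ⟨hcb, h⟩
  rw [hi1] at hcb hcol
  have := hp.le_apply_of_lt_apply_add_two h2 (y := ((p i).1, (p (i + 2)).2))
    (lt_of_le_of_ne ⟨hac.le, le_rfl⟩ fun h => hac.ne (Prod.ext_iff.1 h).1)
    (by rw [hi1]; simp) ⟨le_rfl, hcol.le⟩
  exact absurd this.2 (by simpa using hcol)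

lemma not_le_apply_add_two (hp : IsSYT n p) (h2 : i + 2 < n) (hba : (p (i + 1)).1 ≤ (p i).1)
    (hac : (p i).1 < (p (i + 2)).1) : ¬ p (i + 1) ≤ p (i + 2) := by
  intro hle
  have hi2 : p (i + 2) = ((p (i + 1)).1 + 1, (p (i + 1)).2) :=
    hp.apply_succ_of_fst_lt h2 hle (hba.trans_lt hac)
  have hi1 := hp.apply_succ_of_fst_eq (k := i) (by omega) (by rw [hi2] at hac; dsimp only at hac; omega)
  rw [hi1] at hi2
  have := hp.le_apply_of_lt_apply_add_two h2 (y := ((p i).1 + 1, (p i).2))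
    (by rw [hi2]; exact Prod.mk_lt_mk_of_le_of_lt le_rfl (lt_add_one _)) (by rw [hi1]; simp)
    ⟨by simp, le_rfl⟩
  simpa using this.1

end IsSYT

lemma mem_tauYT : i ∈ tauYT n p ↔ i + 1 < n ∧ (p i).1 < (p (i + 1)).1 := Iff.rfl

lemma fYT_eq_swapEntries_of_DYT (h : DYT n j i (swapEntries i p)) :
    fYT n i j p = swapEntries i p := if_pos h

lemma fYT_eq_swapEntries_of_not_DYT (h : ¬ DYT n j i (swapEntries i p)) :
    fYT n i j p = swapEntries j p := if_neg h

lemma not_DYT_swapEntries (hca : (p (i + 2)).1 ≤ (p i).1) :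
    ¬ DYT n (i + 1) i (swapEntries i p) := fun h => by
  have := h.2.1.2
  simp only [swapEntries_apply_succ, add_assoc, Nat.reduceAdd, swapEntries_apply_add_two] at this
  omega

lemma not_DYT_swapEntries_succ (hca : (p (i + 2)).1 ≤ (p i).1) :
    ¬ DYT n i (i + 1) (swapEntries (i + 1) p) := fun h => by
  have := h.2.1.2
  simp only [swapEntries_succ_apply, swapEntries_apply_self, add_assoc, Nat.reduceAdd] at this
  omega

namespace DYT

lemma DYT_swapEntries_of_lt (hD : DYT n i (i + 1) p) (h2 : i + 2 < n)
    (hac : (p i).1 < (p (i + 2)).1) : DYT n (i + 1) i (swapEntries i p) := by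
  have hcb : (p (i + 2)).1 ≤ (p (i + 1)).1 := le_of_not_gt fun h => hD.2.2 ⟨h2, h⟩
  refine ⟨(hD.1.isSYT_swapEntries_iff (by omega)).2 (hD.1.not_le_apply_succ h2 hac hcb), ?_, ?_⟩
  · simp only [mem_tauYT, swapEntries_apply_succ, add_assoc, Nat.reduceAdd,
      swapEntries_apply_add_two]
    exact ⟨h2, hac⟩
  · simp only [mem_tauYT, swapEntries_apply_succ, swapEntries_apply_self, not_and, not_lt]
    exact fun _ => hD.2.1.2.le

lemma DYT_swapEntries_succ_of_le (hD : DYT n i (i + 1) p) (h2 : i + 2 < n)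
    (hca : (p (i + 2)).1 ≤ (p i).1) : DYT n (i + 1) i (swapEntries (i + 1) p) := by
  have hab := hD.2.1.2
  refine ⟨(hD.1.isSYT_swapEntries_iff h2).2 fun h => ?_, ?_, ?_⟩
  · exact absurd (show (p (i + 1)).1 ≤ (p (i + 2)).1 from h.1) (by omega)
  · simp only [mem_tauYT, swapEntries_apply_self, add_assoc, Nat.reduceAdd,
      swapEntries_apply_succ]
    exact ⟨h2, by omega⟩
  · simp only [mem_tauYT, swapEntries_succ_apply, swapEntries_apply_self, add_assoc,
      Nat.reduceAdd, not_and, not_lt]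
    exact fun _ => hca

lemma DYT_swapEntries_succ_of_lt (hD : DYT n (i + 1) i p) (h2 : i + 2 < n)
    (hac : (p i).1 < (p (i + 2)).1) : DYT n i (i + 1) (swapEntries (i + 1) p) := by
  have hbc : (p (i + 1)).1 < (p (i + 2)).1 := hD.2.1.2
  have hba : (p (i + 1)).1 ≤ (p i).1 := le_of_not_gt fun h => hD.2.2 ⟨by omega, h⟩
  refine ⟨(hD.1.isSYT_swapEntries_iff h2).2 (hD.1.not_le_apply_add_two h2 hba hac), ?_, ?_⟩
  · simp only [mem_tauYT, swapEntries_succ_apply, swapEntries_apply_self, add_assoc,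
      Nat.reduceAdd]
    exact ⟨by omega, hac⟩
  · simp only [mem_tauYT, swapEntries_apply_self, swapEntries_apply_succ, add_assoc,
      Nat.reduceAdd, not_and, not_lt]
    exact fun _ => hbc.le

lemma DYT_swapEntries_of_le (hD : DYT n (i + 1) i p) (h2 : i + 2 < n)
    (hca : (p (i + 2)).1 ≤ (p i).1) : DYT n i (i + 1) (swapEntries i p) := by
  have hbc : (p (i + 1)).1 < (p (i + 2)).1 := hD.2.1.2
  refine ⟨(hD.1.isSYT_swapEntries_iff (by omega)).2 fun h => absurd h.1 (by omega), ?_, ?_⟩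
  · simp only [mem_tauYT, swapEntries_apply_self, swapEntries_apply_succ]
    exact ⟨by omega, by omega⟩
  · simp only [mem_tauYT, swapEntries_apply_succ, add_assoc, Nat.reduceAdd,
      swapEntries_apply_add_two, not_and, not_lt]
    exact fun _ => hca

lemma DYT_fYT (hD : DYT n i j p) (hadj : Adjacent i j) (hj : j + 1 < n) :
    DYT n j i (fYT n i j p) := by
  rcases hadj with rfl | rfl
  · have h2 : j + 2 < n := hD.2.1.1
    rcases lt_or_ge (p j).1 (p (j + 2)).1 with h | h
    · rw [fYT_eq_swapEntries_of_DYT (hD.DYT_swapEntries_succ_of_lt h2 h)]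
      exact hD.DYT_swapEntries_succ_of_lt h2 h
    · rw [fYT_eq_swapEntries_of_not_DYT (not_DYT_swapEntries_succ h)]
      exact hD.DYT_swapEntries_of_le h2 h
  · rcases lt_or_ge (p i).1 (p (i + 2)).1 with h | h
    · rw [fYT_eq_swapEntries_of_DYT (hD.DYT_swapEntries_of_lt hj h)]
      exact hD.DYT_swapEntries_of_lt hj h
    · rw [fYT_eq_swapEntries_of_not_DYT (not_DYT_swapEntries h)]
      exact hD.DYT_swapEntries_succ_of_le hj h

end DYT

lemma mem_tauYT_of_le (hmn : m ≤ n) : i ∈ tauYT m p ↔ i + 1 < m ∧ i ∈ tauYT n p :=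
  ⟨fun h => ⟨h.1, h.1.trans_le hmn, h.2⟩, fun h => ⟨h.1, h.2.2⟩⟩

lemma DYT_iff_of_le (hmn : m ≤ n) (hi : i + 1 < m) (hj : j + 1 < m)
    (hs : IsSYT m p → IsSYT n p) : DYT m i j p ↔ DYT n i j p := by
  simp only [DYT, mem_tauYT_of_le hmn, hi, hj, true_and]
  exact and_congr_left fun _ => ⟨hs, fun h => h.mono hmn⟩

lemma IsSYT.fYT_of_le (hp : IsSYT n p) (hmn : m ≤ n) (hi : i + 1 < m) (hj : j + 1 < m) :
    fYT m i j p = fYT n i j p := by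
  have hs : IsSYT m (swapEntries i p) → IsSYT n (swapEntries i p) := fun h =>
    (hp.isSYT_swapEntries_iff (hi.trans_le hmn)).2 (((hp.mono hmn).isSYT_swapEntries_iff hi).1 h)
  have hD := DYT_iff_of_le hmn hj hi hs
  by_cases h : DYT n j i (swapEntries i p)
  · rw [fYT_eq_swapEntries_of_DYT h, fYT_eq_swapEntries_of_DYT (hD.2 h)]
  · rw [fYT_eq_swapEntries_of_not_DYT h, fYT_eq_swapEntries_of_not_DYT (mt hD.1 h)]

lemma approxYT_of_le (hmn : m ≤ n) :
    ∀ K {p q}, IsSYT n p → IsSYT n q → approxYT n K p q → approxYT m K p q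
  | 0, p, q, _, _, h => by
    ext i
    simp only [mem_tauYT_of_le hmn, show tauYT n p = tauYT n q from h]
  | K + 1, p, q, hp, hq, h => by
    refine ⟨approxYT_of_le hmn K hp hq h.1, fun i j hadj hi hj hDp hDq => ?_⟩
    have hjn : j + 1 < n := hj.trans_le hmn
    have hDp' := (DYT_iff_of_le hmn hi hj fun _ => hp).1 hDp
    have hDq' := (DYT_iff_of_le hmn hi hj fun _ => hq).1 hDq
    rw [hp.fYT_of_le hmn hi hj, hq.fYT_of_le hmn hi hj]
    exact approxYT_of_le hmn K (hDp'.DYT_fYT hadj hjn).1 (hDq'.DYT_fYT hadj hjn).1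
      (h.2 i j hadj (hi.trans_le hmn) hjn hDp' hDq')

lemma tauYT_congr (h : EqOn p q (Iio n)) : tauYT n p = tauYT n q := by
  ext i
  simp only [mem_tauYT]
  exact and_congr_right fun hi => by rw [h (mem_Iio.2 (by omega)), h (mem_Iio.2 hi)]

lemma DYT_congr (h : EqOn p q (Iio n)) : DYT n i j p ↔ DYT n i j q := by
  simp only [DYT, tauYT_congr h]
  exact and_congr_left fun _ => ⟨fun hp => hp.congr h, fun hq => hq.congr h.symm⟩

lemma fYT_congr (h : EqOn p q (Iio n)) (hi : i + 1 < n) (hj : j + 1 < n) :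
    EqOn (fYT n i j p) (fYT n i j q) (Iio n) := by
  have hs := DYT_congr (i := j) (j := i) (swapEntries_congr h hi)
  by_cases hD : DYT n j i (swapEntries i p)
  · rw [fYT_eq_swapEntries_of_DYT hD, fYT_eq_swapEntries_of_DYT (hs.1 hD)]
    exact swapEntries_congr h hi
  · rw [fYT_eq_swapEntries_of_not_DYT hD, fYT_eq_swapEntries_of_not_DYT (mt hs.2 hD)]
    exact swapEntries_congr h hj

lemma fYT_apply_of_le (hi : i + 1 < m) (hj : j + 1 < m) (hk : m ≤ k) :
    fYT n i j p k = p k := by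
  unfold fYT
  split_ifs <;> exact swapEntries_apply_of_ne (by omega) (by omega)

/-- `τ_g(p) = τ_g(q)`. -/
def SameGenTau (n : ℕ) (p q : ℕ → ℕ × ℕ) : Prop := ∀ m, approxYT n m p q

lemma approxYT_symm : ∀ K {p q}, approxYT n K p q → approxYT n K q p
  | 0, _, _, h => Eq.symm h
  | K + 1, _, _, h => ⟨approxYT_symm K h.1,
      fun i j hadj hi hj hDq hDp => approxYT_symm K (h.2 i j hadj hi hj hDp hDq)⟩

namespace SameGenTau

lemma symm (h : SameGenTau n p q) : SameGenTau n q p := fun K => approxYT_symm K (h K)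

lemma tauYT_eq (h : SameGenTau n p q) : tauYT n p = tauYT n q := h 0

lemma of_le (h : SameGenTau n p q) (hmn : m ≤ n) (hp : IsSYT n p) (hq : IsSYT n q) :
    SameGenTau m p q := fun K => approxYT_of_le hmn K hp hq (h K)

lemma DYT (h : SameGenTau n p q) (hD : DYT n i j p) (hq : IsSYT n q) : DYT n i j q :=
  ⟨hq, h.tauYT_eq ▸ hD.2.1, h.tauYT_eq ▸ hD.2.2⟩

lemma fYT (h : SameGenTau n p q) (hD : _root_.DYT n i j p) (hadj : Adjacent i j)
    (hj : j + 1 < n) (hq : IsSYT n q) : SameGenTau n (fYT n i j p) (fYT n i j q) :=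
  fun K => (h (K + 1)).2 i j hadj hD.2.1.1 hj hD (h.DYT hD hq)

end SameGenTau

lemma applySeq_append : applySeq n (L₁ ++ L₂) p = applySeq n L₂ (applySeq n L₁ p) :=
  List.foldl_append ..

namespace ChainDefined

lemma append (h₁ : ChainDefined n L₁ p) (h₂ : ChainDefined n L₂ (applySeq n L₁ p)) :
    ChainDefined n (L₁ ++ L₂) p := by
  induction L₁ generalizing p with
  | nil => exact h₂
  | cons ij L₁ ih => exact ⟨h₁.1, h₁.2.1, h₁.2.2.1, h₁.2.2.2.1, ih h₁.2.2.2.2 h₂⟩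

lemma congr (hc : ChainDefined n L p) (h : EqOn p q (Iio n)) :
    ChainDefined n L q ∧ EqOn (applySeq n L p) (applySeq n L q) (Iio n) := by
  induction L generalizing p q with
  | nil => exact ⟨trivial, h⟩
  | cons ij L ih =>
    obtain ⟨hadj, hi, hj, hD, hc⟩ := hc
    obtain ⟨hc', he⟩ := ih hc (fYT_congr h hi hj)
    exact ⟨⟨hadj, hi, hj, (DYT_congr h).1 hD, hc'⟩, he⟩

lemma of_le (hc : ChainDefined m L p) (hmn : m ≤ n) (hp : IsSYT n p) :
    ChainDefined n L p ∧ applySeq n L p = applySeq m L p := by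
  induction L generalizing p with
  | nil => exact ⟨trivial, rfl⟩
  | cons ij L ih =>
    obtain ⟨hadj, hi, hj, hD, hc⟩ := hc
    have hD' := (DYT_iff_of_le hmn hi hj fun _ => hp).1 hD
    have hf := hp.fYT_of_le hmn hi hj
    rw [hf] at hc
    obtain ⟨hc', he⟩ := ih hc (hD'.DYT_fYT hadj (hj.trans_le hmn)).1
    exact ⟨⟨hadj, hi.trans_le hmn, hj.trans_le hmn, hD', hc'⟩,
      by simp only [applySeq, List.foldl_cons, hf] at he ⊢; exact he⟩

lemma applySeq_apply_of_le (hc : ChainDefined m L p) (hk : m ≤ k) : applySeq m L p k = p k := by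
  induction L generalizing p with
  | nil => rfl
  | cons ij L ih => exact (ih hc.2.2.2.2).trans (fYT_apply_of_le hc.2.1 hc.2.2.1 hk)

end ChainDefined

lemma SameGenTau.applySeq (h : SameGenTau n p q) (hc : ChainDefined n L p) (hq : IsSYT n q) :
    SameGenTau n (applySeq n L p) (applySeq n L q) := by
  induction L generalizing p q with
  | nil => exact h
  | cons ij L ih =>
    obtain ⟨hadj, -, hj, hD, hc⟩ := hc
    exact ih (h.fYT hD hadj hj hq) hc ((h.DYT hD hq).DYT_fYT hadj hj).1

def ChainConnects (n : ℕ) (p q : ℕ → ℕ × ℕ) : Prop :=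
  ∃ L, ChainDefined n L p ∧ EqOn (applySeq n L p) q (Iio n)

namespace ChainConnects

lemma of_eqOn (h : EqOn p q (Iio n)) : ChainConnects n p q := ⟨[], trivial, h⟩

lemma fYT (hD : DYT n i j p) (hadj : Adjacent i j) (hj : j + 1 < n) :
    ChainConnects n p (fYT n i j p) :=
  ⟨[(i, j)], ⟨hadj, hD.2.1.1, hj, hD, trivial⟩, fun _ _ => rfl⟩

lemma trans (h₁ : ChainConnects n p q) (h₂ : ChainConnects n q t) : ChainConnects n p t := by
  obtain ⟨L₁, hc₁, he₁⟩ := h₁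
  obtain ⟨L₂, hc₂, he₂⟩ := h₂
  obtain ⟨hc, he⟩ := hc₂.congr he₁.symm
  exact ⟨L₁ ++ L₂, hc₁.append hc, by rw [applySeq_append]; exact he.symm.trans he₂⟩

lemma succ (h : ChainConnects m p q) (hp : IsSYT (m + 1) p) (htop : p m = q m) :
    ChainConnects (m + 1) p q := by
  obtain ⟨L, hc, he⟩ := h
  obtain ⟨hc', happ⟩ := hc.of_le m.le_succ hp
  refine ⟨L, hc', fun k hk => ?_⟩
  rw [happ]
  rcases (Nat.lt_succ_iff.1 hk).lt_or_eq with hk | rfl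
  · exact he hk
  · exact (hc.applySeq_apply_of_le le_rfl).trans htop

end ChainConnects

lemma IsLowerSet.exists_maximal_fst_eq (hS : IsLowerSet S) (hfin : S.Finite) {r s : ℕ}
    (h1 : (r, s) ∈ S) (h2 : (r + 1, s) ∉ S) : ∃ x, Maximal (· ∈ S) x ∧ x.1 = r := by
  obtain ⟨x, hrx, hx⟩ := hfin.exists_le_maximal h1
  exact ⟨x, hx, le_antisymm (le_of_not_gt fun h => h2 (hS ⟨h, hrx.2⟩ hx.1)) hrx.1⟩

lemma fst_ne_of_maximal (hz : Maximal (· ∈ S) z) (hz' : Maximal (· ∈ S) z') (hne : z ≠ z') :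
    z.1 ≠ z'.1 := fun h => by
  rcases le_total z.2 z'.2 with h' | h'
  · exact hne (hz.eq_of_le hz'.1 ⟨h.le, h'⟩)
  · exact hne (hz'.eq_of_le hz.1 ⟨h.ge, h'⟩).symm

lemma IsLowerSet.sdiff_maximal (hS : IsLowerSet S) (hx : Maximal (· ∈ S) x) :
    IsLowerSet (S \ {x}) :=
  hS.erase fun _ hb hxb => hx.eq_of_ge hb hxb

lemma IsLowerSet.exists_maximal_sdiff_pair (hS : IsLowerSet S) (hfin : S.Finite)
    (hz : Maximal (· ∈ S) z) (hz' : Maximal (· ∈ S) z') (hlt : z'.1 < z.1) :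
    ∃ x, Maximal (· ∈ (S \ {z}) \ {z'}) x ∧ x.1 + 1 = z.1 := by
  obtain ⟨r, hr⟩ : ∃ r, z.1 = r + 1 := ⟨z.1 - 1, by omega⟩
  have hz'S : Maximal (· ∈ S \ {z}) z' :=
    hz'.mono sdiff_subset ⟨hz'.1, fun h => hlt.ne (congrArg Prod.fst h)⟩
  have hbox : ((r, z.2) : ℕ × ℕ) < z := ⟨⟨by omega, le_rfl⟩, fun h => by have := h.1; omega⟩
  obtain ⟨x, hx, hx1⟩ := ((hS.sdiff_maximal hz).sdiff_maximal hz'S).exists_maximal_fst_eq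
    (hfin.subset (sdiff_subset.trans sdiff_subset)) (r := r) (s := z.2)
    ⟨⟨hS hbox.le hz.1, fun h => hbox.ne h⟩, fun h => hz'.not_gt hz.1 (mem_singleton_iff.1 h ▸ hbox)⟩
    (fun h => h.1.2 (by rw [← hr]; rfl))
  exact ⟨x, hx, by omega⟩

lemma shapeYT_update (p : ℕ → ℕ × ℕ) (m : ℕ) (x : ℕ × ℕ) :
    shapeYT (m + 1) (update p m x) = insert x (shapeYT m p) := by
  rw [shapeYT_succ, update_self,
    shapeYT_congr (fun j hj => update_of_ne (mem_Iio.1 hj).ne x p) le_rfl]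

lemma IsSYT.update_of_maximal (hp : IsSYT m p) (hS : IsLowerSet S) (hx : Maximal (· ∈ S) x)
    (hshape : shapeYT m p = S \ {x}) :
    IsSYT (m + 1) (update p m x) ∧ shapeYT (m + 1) (update p m x) = S := by
  have heq : EqOn (update p m x) p (Iio m) := fun j hj => update_of_ne (mem_Iio.1 hj).ne x p
  have hshape' : shapeYT (m + 1) (update p m x) = S := by
    rw [shapeYT_update, hshape, insert_sdiff_self_of_mem hx.1]
  refine ⟨isSYT_iff.2 ⟨?_, fun k hk => ?_⟩, hshape'⟩
  · rw [Iio_add_one_eq_Iic, ← Iio_insert, injOn_insert (by simp), update_self]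
    refine ⟨hp.1.congr heq.symm, ?_⟩
    rw [← shapeYT, shapeYT_congr heq le_rfl, hshape]
    exact fun h => h.2 rfl
  · rcases hk.lt_or_eq with hk | rfl
    · rw [shapeYT_congr heq (by omega)]
      exact hp.isLowerSet_shapeYT (by omega)
    · exact hshape' ▸ hS

lemma IsSYT.exists_isSYT_shapeYT_sdiff (hp : IsSYT (m + 1) p)
    (hx : Maximal (· ∈ shapeYT (m + 1) p) x) :
    ∃ t, IsSYT m t ∧ shapeYT m t = shapeYT (m + 1) p \ {x} := by
  induction m generalizing p with
  | zero =>
    have : x = p 0 := by simpa [shapeYT_succ, shapeYT_zero] using hx.1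
    exact ⟨p, hp.mono (by omega), by rw [this, ← hp.shapeYT_eq_diff (by omega)]⟩
  | succ m ih =>
    by_cases hxm : x = p (m + 1)
    · exact ⟨p, hp.mono (by omega), by rw [hxm, ← hp.shapeYT_eq_diff (by omega)]⟩
    have hxm' : Maximal (· ∈ shapeYT (m + 1) p) x := by
      refine hx.mono (fun y hy => ?_) ?_
      · rw [shapeYT_succ]; exact Or.inr hy
      · have := hx.1
        rw [shapeYT_succ] at this
        exact this.resolve_left hxm
    obtain ⟨t, ht, hts⟩ := ih (hp.mono (by omega)) hxm'
    have htop : Maximal (· ∈ shapeYT (m + 2) p \ {x}) (p (m + 1)) :=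
      (hp.maximal_apply (by omega)).mono sdiff_subset
        ⟨(hp.maximal_apply (by omega)).1, fun h => hxm h.symm⟩
    obtain ⟨hu, hus⟩ := ht.update_of_maximal ((hp.isLowerSet_shapeYT le_rfl).sdiff_maximal hx) htop
      (by rw [hts, Set.sdiff_sdiff_comm, ← hp.shapeYT_eq_diff (by omega)])
    exact ⟨_, hu, hus⟩

lemma IsSYT.exists_isSYT_apply_eq (hp : IsSYT (m + 1) p)
    (hx : Maximal (· ∈ shapeYT (m + 1) p) x) :
    ∃ t, IsSYT (m + 1) t ∧ shapeYT (m + 1) t = shapeYT (m + 1) p ∧ t m = x := by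
  obtain ⟨t, ht, hts⟩ := hp.exists_isSYT_shapeYT_sdiff hx
  obtain ⟨hu, hus⟩ := ht.update_of_maximal (hp.isLowerSet_shapeYT le_rfl) hx hts
  exact ⟨_, hu, hus, update_self ..⟩

-- Depending on which of the rows of `i + 1`, `i + 2` is lower, `t` lies in `D_{i+1,i}` or in
-- `D_{i,i+1}`, and in both cases the row of `i` makes `f^YT` exchange `i + 1` and `i + 2`.
lemma IsSYT.chainConnects_swapEntries_succ (ht : IsSYT n t) (h2 : i + 2 < n)
    (hrow : (t i).1 + 1 = max (t (i + 1)).1 (t (i + 2)).1)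
    (hne : (t (i + 1)).1 ≠ (t (i + 2)).1) :
    IsSYT n (swapEntries (i + 1) t) ∧ ChainConnects n t (swapEntries (i + 1) t) := by
  rcases hne.lt_or_gt with hbc | hcb
  · have hD : DYT n (i + 1) i t := ⟨ht, ⟨h2, hbc⟩, fun h => by have := h.2; omega⟩
    have hD' := hD.DYT_swapEntries_succ_of_lt h2 (by omega)
    refine ⟨hD'.1, ?_⟩
    rw [← fYT_eq_swapEntries_of_DYT hD']
    exact .fYT hD (Or.inl rfl) (by omega)
  · have hD : DYT n i (i + 1) t := ⟨ht, ⟨by omega, by omega⟩, fun h => by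
      have := h.2
      simp only [add_assoc, Nat.reduceAdd] at this
      omega⟩
    have hca : (t (i + 2)).1 ≤ (t i).1 := by omega
    refine ⟨(hD.DYT_swapEntries_succ_of_le h2 hca).1, ?_⟩
    rw [← fYT_eq_swapEntries_of_not_DYT (not_DYT_swapEntries hca)]
    exact .fYT hD (Or.inr rfl) h2

-- A tableau of the common shape whose two largest entries are those of `q` and `p` and can be
-- exchanged by one move (`chainConnects_swapEntries_succ`): the entry below them is put into a
-- removable corner just above the lower of the two corners.
lemma IsSYT.exists_isSYT_swappable_top (hp : IsSYT (m + 1) p) (hq : IsSYT (m + 1) q)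
    (hs : shapeYT (m + 1) p = shapeYT (m + 1) q) (hne : p m ≠ q m) :
    ∃ i t, i + 2 = m ∧ IsSYT (m + 1) t ∧ shapeYT (m + 1) t = shapeYT (m + 1) p ∧
      t m = p m ∧ t (i + 1) = q m ∧
      (t i).1 + 1 = max (t (i + 1)).1 (t (i + 2)).1 ∧ (t (i + 1)).1 ≠ (t (i + 2)).1 := by
  set S := shapeYT (m + 1) p
  have hS : IsLowerSet S := hp.isLowerSet_shapeYT le_rfl
  have hz : Maximal (· ∈ S) (p m) := hp.maximal_apply (lt_add_one m)
  have hz' : Maximal (· ∈ S) (q m) := hs ▸ hq.maximal_apply (lt_add_one m)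
  have hrow := fst_ne_of_maximal hz hz' hne
  obtain ⟨x, hx, hx1⟩ : ∃ x, Maximal (· ∈ (S \ {p m}) \ {q m}) x ∧
      x.1 + 1 = max (q m).1 (p m).1 := by
    rcases hrow.lt_or_gt with h | h
    · obtain ⟨x, hx, hx1⟩ := hS.exists_maximal_sdiff_pair (shapeYT_finite _ _) hz' hz h
      exact ⟨x, by rwa [Set.sdiff_sdiff_comm], by omega⟩
    · obtain ⟨x, hx, hx1⟩ := hS.exists_maximal_sdiff_pair (shapeYT_finite _ _) hz hz' h
      exact ⟨x, hx, by omega⟩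
  have hSz : shapeYT m p = S \ {p m} := hp.shapeYT_eq_diff (lt_add_one m)
  have hz'z : Maximal (· ∈ S \ {p m}) (q m) := hz'.mono sdiff_subset ⟨hz'.1, Ne.symm hne⟩
  rcases m with _ | k
  · simpa [← hSz, shapeYT_zero] using hz'z.1
  obtain ⟨t1, ht1, ht1s, ht1top⟩ := (hp.mono (by omega)).exists_isSYT_apply_eq (hSz ▸ hz'z)
  have ht1k : shapeYT k t1 = (S \ {p (k + 1)}) \ {q (k + 1)} := by
    rw [ht1.shapeYT_eq_diff (lt_add_one k), ht1s, hSz, ht1top]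
  rcases k with _ | M
  · simpa [← ht1k, shapeYT_zero] using hx.1
  obtain ⟨t2, ht2, ht2s, ht2top⟩ := (ht1.mono (by omega)).exists_isSYT_apply_eq (ht1k ▸ hx)
  obtain ⟨hu, hus⟩ := ht2.update_of_maximal (hS.sdiff_maximal hz) hz'z (ht2s.trans ht1k)
  obtain ⟨ht, hts⟩ := hu.update_of_maximal hS hz hus
  refine ⟨M, _, rfl, ht, hts, update_self .., ?_⟩
  simp only [update_self, ne_eq, update_of_ne (show M + 1 ≠ M + 2 by omega),
    update_of_ne (show M ≠ M + 2 by omega), update_of_ne (show M ≠ M + 1 by omega), ht2top,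
    true_and]
  exact ⟨hx1, hrow.symm⟩

theorem chainConnects_of_shapeYT_eq :
    ∀ {m p q}, IsSYT m p → IsSYT m q → shapeYT m p = shapeYT m q → ChainConnects m p q
  | 0, _, _, _, _, _ => .of_eqOn fun _ hk => absurd hk (Nat.not_lt_zero _)
  | m + 1, p, q, hp, hq, hs => by
    have same_top : ∀ {p q}, IsSYT (m + 1) p → IsSYT (m + 1) q →
        shapeYT (m + 1) p = shapeYT (m + 1) q → p m = q m → ChainConnects (m + 1) p q := by
      intro p q hp hq hs htop
      refine (chainConnects_of_shapeYT_eq (hp.mono m.le_succ) (hq.mono m.le_succ) ?_).succ hp htop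
      rw [hp.shapeYT_eq_diff (lt_add_one m), hq.shapeYT_eq_diff (lt_add_one m), hs, htop]
    by_cases htop : p m = q m
    · exact same_top hp hq hs htop
    obtain ⟨i, t, rfl, ht, hts, htm, hti, hrow, hne⟩ := hp.exists_isSYT_swappable_top hq hs htop
    obtain ⟨hsw, hmove⟩ := ht.chainConnects_swapEntries_succ (by omega) hrow hne
    refine (same_top hp ht hts.symm htm.symm).trans (hmove.trans (same_top hsw hq ?_ ?_))
    · rw [shapeYT_swapEntries_of_lt (by omega), hts, hs]
    · exact (swapEntries_apply_succ (i := i + 1)).trans hti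

lemma IsSYT.apply_eq_of_fst_eq (hp : IsSYT (N + 1) p) (hp' : IsSYT (N + 1) p')
    (hbelow : EqOn p p' (Iio N)) (hrow : (p N).1 = (p' N).1) : p N = p' N := by
  have hs := shapeYT_congr hbelow le_rfl
  wlog h : (p N).2 ≤ (p' N).2 generalizing p p'
  · exact (this hp' hp hbelow.symm hrow.symm hs.symm (le_of_not_ge h)).symm
  by_contra hne
  exact hp.apply_notMem_shapeYT (lt_add_one N) le_rfl
    (hs ▸ hp'.mem_shapeYT_of_lt (lt_add_one N) (lt_of_le_of_ne ⟨hrow.le, h⟩ hne))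

-- If `p N` were higher, a chain of moves on the common part bringing the entry `N - 1` into a
-- removable corner just above `p' N` would keep `τ_g` equal, but afterwards `N - 1` lies in the
-- τ-invariant of the image of `p'` and not in that of the image of `p`.
lemma IsSYT.fst_apply_le_of_sameGenTau (hp : IsSYT (N + 1) p) (hp' : IsSYT (N + 1) p')
    (h : SameGenTau (N + 1) p p') (hbelow : EqOn p p' (Iio N)) : (p' N).1 ≤ (p N).1 := by
  by_contra! hlt
  obtain ⟨r, hr⟩ : ∃ r, (p' N).1 = r + 1 := ⟨(p' N).1 - 1, by omega⟩
  have hs := shapeYT_congr hbelow le_rfl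
  have hbox : ((r, (p' N).2) : ℕ × ℕ) < p' N := ⟨⟨by omega, le_rfl⟩, fun h => by have := h.1; omega⟩
  obtain ⟨x, hx, hx1⟩ := (hp.isLowerSet_shapeYT N.le_succ).exists_maximal_fst_eq
    (shapeYT_finite N p) (hs ▸ hp'.mem_shapeYT_of_lt (lt_add_one N) hbox)
    (hs ▸ by rw [← hr]; exact hp'.apply_notMem_shapeYT (lt_add_one N) le_rfl)
  rcases N with _ | M
  · simp [shapeYT_zero] at hx
  obtain ⟨W, hW, hWs, hWM⟩ := (hp.mono (by omega)).exists_isSYT_apply_eq hx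
  obtain ⟨L, hc, he⟩ := chainConnects_of_shapeYT_eq (hp.mono (by omega)) hW hWs.symm
  obtain ⟨hc', he'⟩ := hc.congr hbelow
  obtain ⟨hcn, happ⟩ := hc.of_le (M + 1).le_succ hp
  obtain ⟨hcn', happ'⟩ := hc'.of_le (M + 1).le_succ hp'
  have hP : applySeq (M + 2) L p M = x ∧ applySeq (M + 2) L p (M + 1) = p (M + 1) := by
    rw [happ, he (lt_add_one M), hWM, hc.applySeq_apply_of_le le_rfl]
    exact ⟨rfl, rfl⟩
  have hP' : applySeq (M + 2) L p' M = x ∧ applySeq (M + 2) L p' (M + 1) = p' (M + 1) := by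
    rw [happ', ← he' (lt_add_one M), he (lt_add_one M), hWM, hc'.applySeq_apply_of_le le_rfl]
    exact ⟨rfl, rfl⟩
  have hτ := congrArg (M ∈ ·) (h.applySeq hcn hp').tauYT_eq
  simp only [mem_tauYT, hP, hP', eq_iff_iff] at hτ
  omega

theorem IsSYT.eqOn_of_sameGenTau (hp : IsSYT n p) (hp' : IsSYT n p') (h : SameGenTau n p p') :
    EqOn p p' (Iio n) := by
  induction n with
  | zero => exact fun _ hk => absurd hk (Nat.not_lt_zero _)
  | succ N ih =>
    have hbelow := ih (hp.mono N.le_succ) (hp'.mono N.le_succ) (h.of_le N.le_succ hp hp')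
    have htop : p N = p' N := hp.apply_eq_of_fst_eq hp' hbelow <| le_antisymm
      (hp'.fst_apply_le_of_sameGenTau hp h.symm hbelow.symm)
      (hp.fst_apply_le_of_sameGenTau hp' h hbelow)
    intro k hk
    rcases (Nat.lt_succ_iff.1 hk).lt_or_eq with hk | rfl
    · exact hbelow hk
    · exact htop

end

/-- **Vogan.** Standard Young tableaux with `n` boxes having the
same generalized τ-invariant are equal. -/
theorem stmt7 (n : ℕ) (p p' : ℕ → ℕ × ℕ) (hp : IsSYT n p) (hp' : IsSYT n p')
    (h : ∀ m : ℕ, approxYT n m p p') :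
    ∀ k < n, p k = p' k :=
  fun _ hk => hp.eqOn_of_sameGenTau hp' h hk
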